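/- arXiv:2310.04702 — 4 statements merged into one kernel-verified Lean document; each statement's English description precedes it below -/
import Mathlib

section
/- Let ρ_m > 0 and ρ ∈ ℝ with 0 < ρ ≤ ρ_m / 2. Then for every p ∈ ℝ², z₁ ∈ ℝ and z₂ ∈ ℝ², the quadratic form of the matrix H_c for β = 2 is nonnegative: (2/ρ)(ρ_m − ρ) ‖p‖² z₁² − 4 (ρ_m − ρ) ⟨p, z₂⟩ z₁ + 2 (ρ_m − ρ)² ‖z₂‖² ≥ 0. -/
open Real Set
open scoped RealInnerProductSpace

/-- **Positive semidefiniteness of the matrix `H_c` for `β = 2` when `0 < ρ ≤ ρ_m/2`.**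
For all `p, z₂ ∈ ℝ²` and `z₁ ∈ ℝ`:
`(2/ρ)(ρ_m-ρ)‖p‖² z₁² - 4(ρ_m-ρ)⟨p,z₂⟩ z₁ + 2(ρ_m-ρ)² ‖z₂‖² ≥ 0`. -/
theorem quadratic_form_nonneg_beta_two
    (ρm ρ : ℝ) (hρm : 0 < ρm) (hρ : 0 < ρ) (hρ2 : ρ ≤ ρm / 2)
    (p : EuclideanSpace ℝ (Fin 2)) (z₁ : ℝ) (z₂ : EuclideanSpace ℝ (Fin 2)) :
    (2/ρ) * (ρm - ρ) * ‖p‖ ^ 2 * z₁ ^ 2 - 4 * (ρm - ρ) * ⟪p, z₂⟫ * z₁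
        + 2 * (ρm - ρ) ^ 2 * ‖z₂‖ ^ 2 ≥ 0 := by
  have ha : ρ ≤ ρm - ρ := by linarith
  have h1 : ⟪p, z₂⟫ ≤ ‖p‖ * ‖z₂‖ := real_inner_le_norm p z₂
  have h2 : -(‖p‖ * ‖z₂‖) ≤ ⟪p, z₂⟫ := neg_le_of_abs_le (abs_real_inner_le_norm p z₂)
  have hp : (0:ℝ) ≤ ‖p‖ := norm_nonneg p
  have hz : (0:ℝ) ≤ ‖z₂‖ := norm_nonneg z₂
  rw [ge_iff_le, ← sub_nonneg, sub_zero, ← mul_nonneg_iff_of_pos_left (c := ρ) hρ]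
  have key : ρ * ((2/ρ) * (ρm - ρ) * ‖p‖ ^ 2 * z₁ ^ 2 - 4 * (ρm - ρ) * ⟪p, z₂⟫ * z₁
      + 2 * (ρm - ρ) ^ 2 * ‖z₂‖ ^ 2)
      = 2 * (ρm - ρ) * ‖p‖ ^ 2 * z₁ ^ 2 - 4 * ρ * (ρm - ρ) * ⟪p, z₂⟫ * z₁
      + 2 * ρ * (ρm - ρ) ^ 2 * ‖z₂‖ ^ 2 := by
    field_simp
  rw [key]
  have ha0 : (0:ℝ) < ρm - ρ := lt_of_lt_of_le hρ ha
  rcases le_or_gt 0 z₁ with hz1 | hz1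
  · nlinarith [sq_nonneg (‖p‖ * z₁ - ρ * ‖z₂‖), mul_nonneg hz1 (sub_nonneg.mpr h1),
      mul_nonneg (mul_nonneg (le_of_lt hρ) hz) hz,
      mul_pos ha0 hρ, mul_nonneg (mul_nonneg hz hz) (mul_nonneg (le_of_lt hρ) (sub_nonneg.mpr ha)),
      mul_nonneg (mul_nonneg (mul_nonneg (le_of_lt ha0) (le_of_lt hρ)) hz1) (sub_nonneg.mpr h1)]
  · nlinarith [sq_nonneg (‖p‖ * z₁ + ρ * ‖z₂‖),
      mul_nonneg (mul_nonneg hz hz) (mul_nonneg (le_of_lt hρ) (sub_nonneg.mpr ha)),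
      mul_nonneg (mul_nonneg (mul_nonneg (le_of_lt ha0) (le_of_lt hρ)) (le_of_lt (neg_pos.mpr hz1))) (sub_nonneg.mpr h2)]
end

section
/- Let ρ_m > 0 and let H(ρ,p) = (1/2)(ρ_m − ρ)² ‖p‖² − 1/2 be the generalized Hughes Hamiltonian with β = 2. For all ρ₁, ρ₂ ∈ (0, ρ_m/2] and all p₁, p₂ ∈ ℝ², the Lasry–Lions monotonicity quantity is nonnegative: −( H(ρ₁,p₁) − H(ρ₂,p₂) ) (ρ₁ − ρ₂) + ⟨ ρ₁ (ρ_m − ρ₁)² p₁ − ρ₂ (ρ_m − ρ₂)² p₂ , p₁ − p₂ ⟩ ≥ 0. -/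
open Real Set
open scoped RealInnerProductSpace

/-- **Lasry–Lions monotonicity for the generalized Hughes Hamiltonian with `β = 2`.**
With `H(ρ,p) = ½(ρ_m-ρ)²‖p‖² - ½` and `H_p(ρ,p) = (ρ_m-ρ)² p`, for all
`ρ₁, ρ₂ ∈ (0, ρ_m/2]` and `p₁, p₂ ∈ ℝ²`:
`-(H(ρ₁,p₁) - H(ρ₂,p₂))(ρ₁-ρ₂) + ⟨ρ₁ H_p(ρ₁,p₁) - ρ₂ H_p(ρ₂,p₂), p₁-p₂⟫ ≥ 0`. -/
theorem lasry_lions_monotonicity_beta_two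
    (ρm : ℝ) (hρm : 0 < ρm)
    (ρ₁ ρ₂ : ℝ) (hρ₁ : ρ₁ ∈ Set.Ioc (0:ℝ) (ρm / 2)) (hρ₂ : ρ₂ ∈ Set.Ioc (0:ℝ) (ρm / 2))
    (p₁ p₂ : EuclideanSpace ℝ (Fin 2)) :
    -(((1/2) * (ρm - ρ₁) ^ 2 * ‖p₁‖ ^ 2 - 1/2)
        - ((1/2) * (ρm - ρ₂) ^ 2 * ‖p₂‖ ^ 2 - 1/2)) * (ρ₁ - ρ₂)
      + ⟪(ρ₁ * (ρm - ρ₁) ^ 2) • p₁ - (ρ₂ * (ρm - ρ₂) ^ 2) • p₂, p₁ - p₂⟫ ≥ 0 := by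
  obtain ⟨h1, h2⟩ := hρ₁
  obtain ⟨h3, h4⟩ := hρ₂
  have hx : (0:ℝ) ≤ ‖p₁‖ := norm_nonneg _
  have hy : (0:ℝ) ≤ ‖p₂‖ := norm_nonneg _
  have hs : ⟪p₁, p₂⟫ ≤ ‖p₁‖ * ‖p₂‖ := real_inner_le_norm p₁ p₂
  have e1 : ⟪p₁, p₁⟫ = ‖p₁‖ ^ 2 := real_inner_self_eq_norm_sq p₁
  have e2 : ⟪p₂, p₂⟫ = ‖p₂‖ ^ 2 := real_inner_self_eq_norm_sq p₂
  have e3 : ⟪p₂, p₁⟫ = ⟪p₁, p₂⟫ := real_inner_comm p₁ p₂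
  rw [inner_sub_left, inner_sub_right, inner_sub_right, real_inner_smul_left,
    real_inner_smul_left, real_inner_smul_left, real_inner_smul_left, e1, e2, e3]
  have hA : (0:ℝ) < ρm - ρ₁ := by linarith
  have hB : (0:ℝ) < ρm - ρ₂ := by linarith
  have hP : (0:ℝ) < ρ₁ * (ρm - ρ₁)^2 + ρ₂ * (ρm - ρ₂)^2 := by positivity
  have hC : (0:ℝ) ≤ ρm - ρ₁ - ρ₂ := by linarith
  nlinarith [sq_nonneg (‖p₁‖ * (ρm - ρ₁) - ‖p₂‖ * (ρm - ρ₂)),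
    mul_nonneg (mul_nonneg hx hy) (mul_nonneg (sq_nonneg (ρ₁ - ρ₂)) hC),
    mul_nonneg hx hy, mul_le_mul_of_nonneg_left hs hP.le,
    sq_nonneg (ρ₁ + ρ₂), mul_pos h1 h3]
end

section
/- Let ρ_m > 0, β ∈ [0,2], σ ≥ 0, T > 0, and let ρ, φ : ℝ × ℝ² → ℝ be smooth functions that are ℤ²-periodic in the space variable (ρ(t, x+k) = ρ(t,x) and φ(t, x+k) = φ(t,x) for all k ∈ ℤ²) with 0 < ρ(t,x) < ρ_m for all (t,x). Assume that on [0,T] × ℝ²: ∂_t ρ = div( ρ f(ρ)^{β} ∇φ ) + σ Δρ and ∂_t φ = (1/2) f(ρ)^{β} ‖∇φ‖² − (1/2) f(ρ)^{2−β} − σ Δφ, where f(ρ) = ρ_m − ρ. Then the energy identity holds: ∫_{[0,1]²} φ(0,x) ρ(0,x) dx = ∫_{[0,1]²} φ(T,x) ρ(T,x) dx + ∫_0^T ∫_{[0,1]²} ρ ( (1/2) f(ρ)^{β} ‖∇φ‖² + (1/2) f(ρ)^{2−β} ) dx dt. -/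
open Real Set MeasureTheory
open scoped RealInnerProductSpace

/-- Divergence of a vector field on `ℝ²` (sum of partial derivatives). -/
noncomputable def div2 (V : EuclideanSpace ℝ (Fin 2) → EuclideanSpace ℝ (Fin 2))
    (x : EuclideanSpace ℝ (Fin 2)) : ℝ :=
  ∑ i, fderiv ℝ V x (EuclideanSpace.single i 1) i

/-- Laplacian of a scalar function on `ℝ²` (sum of second partial derivatives). -/
noncomputable def lap2 (u : EuclideanSpace ℝ (Fin 2) → ℝ)
    (x : EuclideanSpace ℝ (Fin 2)) : ℝ :=
  ∑ i, fderiv ℝ (fun y => fderiv ℝ u y (EuclideanSpace.single i 1)) x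
    (EuclideanSpace.single i 1)

/-- The periodicity cell `[0,1]² ⊆ ℝ²`. -/
def cell2 : Set (EuclideanSpace ℝ (Fin 2)) := {x | ∀ i, x i ∈ Set.Icc (0:ℝ) 1}

namespace HughesAux

local notation "E2" => EuclideanSpace ℝ (Fin 2)

/-! ### Pointwise calculus lemmas -/

lemma gradient_coord (u : E2 → ℝ) (x : E2) (i : Fin 2) :
    gradient u x i = fderiv ℝ u x (EuclideanSpace.single i 1) := by
  have h : gradient u x i = (inner ℝ (gradient u x) (EuclideanSpace.single i (1:ℝ)) : ℝ) := by
    rw [EuclideanSpace.inner_single_right]; simp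
  rw [h, gradient, InnerProductSpace.toDual_symm_apply]

lemma real_inner_eucl (v w : E2) : (inner ℝ v w : ℝ) = ∑ i, v i * w i := by
  simp [PiLp.inner_apply, RCLike.inner_apply, conj_trivial]; ring

lemma fderiv_coord (W : E2 → E2) (x : E2) (hW : DifferentiableAt ℝ W x) (v : E2) (i : Fin 2) :
    fderiv ℝ W x v i = fderiv ℝ (fun y => W y i) x v := by
  have h : (fun y => W y i) = (EuclideanSpace.proj i : E2 →L[ℝ] ℝ) ∘ W := by
    funext y; rfl
  rw [h, fderiv_comp x (EuclideanSpace.proj i).differentiableAt hW, ContinuousLinearMap.fderiv]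
  simp

lemma contDiff_gradient (u : E2 → ℝ) (hu : ContDiff ℝ (⊤ : ℕ∞) u) :
    ContDiff ℝ (⊤ : ℕ∞) (gradient u) := by
  have h : gradient u = fun x => (InnerProductSpace.toDual ℝ E2).symm (fderiv ℝ u x) := rfl
  rw [h]
  exact (InnerProductSpace.toDual ℝ E2).symm.contDiff.comp (hu.fderiv_right (by simp))

lemma continuous_div2 (W : E2 → E2) (hW : ContDiff ℝ (⊤ : ℕ∞) W) : Continuous (div2 W) := by
  refine continuous_finset_sum _ fun i _ => ?_
  have h1 : Continuous (fderiv ℝ W) := hW.continuous_fderiv (by simp)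
  exact (EuclideanSpace.proj i).continuous.comp (h1.clm_apply continuous_const)

lemma div2_add (A B : E2 → E2) (x : E2) (hA : DifferentiableAt ℝ A x)
    (hB : DifferentiableAt ℝ B x) :
    div2 (fun y => A y + B y) x = div2 A x + div2 B x := by
  unfold div2
  rw [fderiv_fun_add hA hB, ← Finset.sum_add_distrib]
  simp

lemma div2_sub (A B : E2 → E2) (x : E2) (hA : DifferentiableAt ℝ A x)
    (hB : DifferentiableAt ℝ B x) :
    div2 (fun y => A y - B y) x = div2 A x - div2 B x := by
  unfold div2
  rw [fderiv_fun_sub hA hB, ← Finset.sum_sub_distrib]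
  simp

lemma div2_const_smul (σ : ℝ) (A : E2 → E2) (x : E2) (hA : DifferentiableAt ℝ A x) :
    div2 (fun y => σ • A y) x = σ * div2 A x := by
  unfold div2
  rw [fderiv_fun_const_smul hA σ, Finset.mul_sum]
  simp [mul_comm]

lemma div2_smul (h : E2 → ℝ) (V : E2 → E2) (x : E2) (hh : DifferentiableAt ℝ h x)
    (hV : DifferentiableAt ℝ V x) :
    div2 (fun y => h y • V y) x = (inner ℝ (gradient h x) (V x) : ℝ) + h x * div2 V x := by
  unfold div2
  rw [fderiv_fun_smul hh hV]
  simp only [ContinuousLinearMap.add_apply, ContinuousLinearMap.smul_apply,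
    ContinuousLinearMap.smulRight_apply, PiLp.add_apply, PiLp.smul_apply, smul_eq_mul]
  rw [real_inner_eucl, Finset.mul_sum, ← Finset.sum_add_distrib]
  refine Finset.sum_congr rfl fun i _ => ?_
  rw [gradient_coord]
  ring

lemma div2_gradient (u : E2 → ℝ) (hu : ContDiff ℝ (⊤ : ℕ∞) u) (x : E2) :
    div2 (gradient u) x = lap2 u x := by
  have hgrad : ContDiff ℝ (⊤ : ℕ∞) (gradient u) := contDiff_gradient u hu
  unfold div2 lap2
  refine Finset.sum_congr rfl fun i _ => ?_
  rw [fderiv_coord _ _ (hgrad.differentiable (by simp) x)]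
  have hfun : (fun y => gradient u y i) = (fun y => fderiv ℝ u y (EuclideanSpace.single i 1)) :=
    funext fun y => gradient_coord u y i
  rw [hfun]

/-! ### Shift / periodicity lemmas -/

lemma fderiv_shift {F : Type*} [NormedAddCommGroup F] [NormedSpace ℝ F] (u : E2 → F)
    (hu : Differentiable ℝ u) (v : E2) (hper : ∀ y, u (y + v) = u y) (x : E2) :
    fderiv ℝ u (x + v) = fderiv ℝ u x := by
  have h1 : HasFDerivAt (fun y : E2 => u (y + v)) (fderiv ℝ u (x + v)) x := by
    have h2 := (hu (x + v)).hasFDerivAt.comp x ((hasFDerivAt_id x).add_const v)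
    exact h2
  have h3 : (fun y : E2 => u (y + v)) = u := funext hper
  rw [h3] at h1
  exact h1.fderiv.symm

lemma gradient_shift (u : E2 → ℝ) (hu : Differentiable ℝ u) (v : E2)
    (hper : ∀ y, u (y + v) = u y) (x : E2) :
    gradient u (x + v) = gradient u x := by
  unfold gradient
  rw [fderiv_shift u hu v hper x]

lemma single_eq_intvec (i : Fin 2) :
    ((EuclideanSpace.equiv (Fin 2) ℝ).symm fun j => ((Pi.single i 1 : Fin 2 → ℤ) j : ℝ))
      = EuclideanSpace.single i (1:ℝ) := by
  ext j
  show ((Pi.single i 1 : Fin 2 → ℤ) j : ℝ) = EuclideanSpace.single i (1:ℝ) j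
  rw [EuclideanSpace.single_apply, Pi.single_apply]
  split_ifs <;> simp

/-! ### The cell and change of variables -/

noncomputable def toE2 (a b : ℝ) : EuclideanSpace ℝ (Fin 2) :=
  (WithLp.equiv 2 (Fin 2 → ℝ)).symm ![a, b]

lemma toE2_coord (a b : ℝ) (i : Fin 2) : toE2 a b i = ![a, b] i := rfl

lemma continuous_toE2 : Continuous fun p : ℝ × ℝ => toE2 p.1 p.2 := by
  refine (PiLp.continuousLinearEquiv 2 ℝ (fun _ : Fin 2 => ℝ)).symm.continuous.comp ?_
  refine continuous_pi fun i => ?_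
  fin_cases i <;> simp <;> [exact continuous_fst; exact continuous_snd]

lemma isCompact_cell2 : IsCompact cell2 := by
  have h : cell2 = (fun p : ℝ × ℝ => toE2 p.1 p.2) '' (Icc (0:ℝ) 1 ×ˢ Icc (0:ℝ) 1) := by
    ext x
    constructor
    · intro hx
      refine ⟨(x 0, x 1), ⟨hx 0, hx 1⟩, ?_⟩
      ext i
      fin_cases i <;> rfl
    · rintro ⟨⟨a, b⟩, ⟨ha, hb⟩, rfl⟩
      intro i
      fin_cases i <;> simpa [toE2_coord]
  rw [h]
  exact ((isCompact_Icc.prod isCompact_Icc).image continuous_toE2)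

lemma measurableSet_cell2 : MeasurableSet cell2 := isCompact_cell2.isClosed.measurableSet

noncomputable def e2equiv : EuclideanSpace ℝ (Fin 2) ≃ᵐ ℝ × ℝ :=
  (MeasurableEquiv.toLp 2 (Fin 2 → ℝ)).symm.trans MeasurableEquiv.finTwoArrow

lemma e2equiv_mp : MeasurePreserving e2equiv := by
  have h1 := EuclideanSpace.volume_preserving_symm_measurableEquiv_toLp (Fin 2)
  have h2 := volume_preserving_finTwoArrow ℝ
  exact h2.comp h1

lemma cell2_eq_preimage : cell2 = e2equiv ⁻¹' (Icc (0:ℝ) 1 ×ˢ Icc (0:ℝ) 1) := by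
  ext x
  simp only [cell2, mem_setOf_eq, mem_preimage, Set.mem_prod]
  constructor
  · intro h; exact ⟨h 0, h 1⟩
  · rintro ⟨h0, h1⟩ i; fin_cases i <;> assumption

lemma setIntegral_cell2_prod (g : E2 → ℝ) :
    ∫ x in cell2, g x = ∫ p in Icc (0:ℝ) 1 ×ˢ Icc (0:ℝ) 1, g (toE2 p.1 p.2) := by
  rw [cell2_eq_preimage]
  have h := e2equiv_mp.setIntegral_preimage_emb e2equiv.measurableEmbedding
    (fun p => g (toE2 p.1 p.2)) (Icc (0:ℝ) 1 ×ˢ Icc (0:ℝ) 1)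
  rw [← h]
  refine setIntegral_congr_fun (e2equiv.measurable (measurableSet_Icc.prod measurableSet_Icc)) ?_
  intro x _
  have hx : toE2 (e2equiv x).1 (e2equiv x).2 = x := by
    ext i; fin_cases i <;> rfl
  show g x = g (toE2 (e2equiv x).1 (e2equiv x).2)
  rw [hx]

lemma setIntegral_cell2 (g : E2 → ℝ) (hg : Continuous g) :
    ∫ x in cell2, g x = ∫ a in Icc (0:ℝ) 1, ∫ b in Icc (0:ℝ) 1, g (toE2 a b) := by
  rw [setIntegral_cell2_prod g]
  have hint : IntegrableOn (fun p : ℝ × ℝ => g (toE2 p.1 p.2))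
      (Icc (0:ℝ) 1 ×ˢ Icc (0:ℝ) 1) volume :=
    ((hg.comp continuous_toE2).continuousOn).integrableOn_compact
      (isCompact_Icc.prod isCompact_Icc)
  rw [Measure.volume_eq_prod] at hint ⊢
  exact setIntegral_prod _ hint

lemma setIntegral_cell2' (g : E2 → ℝ) (hg : Continuous g) :
    ∫ x in cell2, g x = ∫ b in Icc (0:ℝ) 1, ∫ a in Icc (0:ℝ) 1, g (toE2 a b) := by
  rw [setIntegral_cell2_prod g]
  have hswap : ∫ p in Icc (0:ℝ) 1 ×ˢ Icc (0:ℝ) 1, g (toE2 p.1 p.2)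
      = ∫ q in Icc (0:ℝ) 1 ×ˢ Icc (0:ℝ) 1, g (toE2 q.2 q.1) := by
    have hmp : MeasurePreserving (Prod.swap : ℝ × ℝ → ℝ × ℝ) volume volume := by
      rw [Measure.volume_eq_prod]
      exact Measure.measurePreserving_swap
    have h := hmp.setIntegral_preimage_emb
      (MeasurableEquiv.prodComm (α := ℝ) (β := ℝ)).measurableEmbedding
      (fun p : ℝ × ℝ => g (toE2 p.1 p.2)) (Icc (0:ℝ) 1 ×ˢ Icc (0:ℝ) 1)
    rw [← h, Set.preimage_swap_prod]
    rfl
  rw [hswap]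
  have hint : IntegrableOn (fun p : ℝ × ℝ => g (toE2 p.2 p.1))
      (Icc (0:ℝ) 1 ×ˢ Icc (0:ℝ) 1) volume := by
    have hc : Continuous fun p : ℝ × ℝ => g (toE2 p.2 p.1) :=
      (hg.comp continuous_toE2).comp continuous_swap
    exact hc.continuousOn.integrableOn_compact (isCompact_Icc.prod isCompact_Icc)
  rw [Measure.volume_eq_prod] at hint ⊢
  exact setIntegral_prod _ hint

/-! ### Periodic fundamental theorem of calculus, and vanishing of `∫ div2` -/

lemma integral_line_deriv_zero (u : E2 → ℝ) (hu : ContDiff ℝ (⊤ : ℕ∞) u) (P v : E2)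
    (hper : ∀ y, u (y + v) = u y) :
    ∫ s in Icc (0:ℝ) 1, fderiv ℝ u (P + s • v) v = 0 := by
  have hd : ∀ s : ℝ, HasDerivAt (fun r : ℝ => u (P + r • v)) (fderiv ℝ u (P + s • v) v) s := by
    intro s
    have hline : HasDerivAt (fun r : ℝ => P + r • v) v s := by
      simpa using ((hasDerivAt_id s).smul_const v).const_add P
    exact ((hu.differentiable (by simp) (P + s • v)).hasFDerivAt).comp_hasDerivAt s hline
  have hcont : Continuous fun s : ℝ => fderiv ℝ u (P + s • v) v := by
    have h1 : Continuous fun s : ℝ => P + s • v := by continuity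
    exact ((hu.continuous_fderiv (by simp)).comp h1).clm_apply continuous_const
  rw [MeasureTheory.integral_Icc_eq_integral_Ioc, ← intervalIntegral.integral_of_le zero_le_one,
    intervalIntegral.integral_eq_sub_of_hasDerivAt (fun s _ => hd s)
      (hcont.intervalIntegrable 0 1)]
  simp [hper P]

lemma toE2_line1 (a b : ℝ) : toE2 a b = toE2 a 0 + b • EuclideanSpace.single 1 (1:ℝ) := by
  ext i
  fin_cases i <;>
    simp [toE2_coord, PiLp.add_apply, PiLp.smul_apply, EuclideanSpace.single_apply]

lemma toE2_line0 (a b : ℝ) : toE2 a b = toE2 0 b + a • EuclideanSpace.single 0 (1:ℝ) := by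
  ext i
  fin_cases i <;>
    simp [toE2_coord, PiLp.add_apply, PiLp.smul_apply, EuclideanSpace.single_apply]

lemma setIntegral_div2_zero (W : E2 → E2) (hW : ContDiff ℝ (⊤ : ℕ∞) W)
    (hper : ∀ (x : E2) (i : Fin 2), W (x + EuclideanSpace.single i 1) = W x) :
    ∫ x in cell2, div2 W x = 0 := by
  have hu : ∀ i : Fin 2, ContDiff ℝ (⊤ : ℕ∞) (fun y => W y i) := fun i =>
    (EuclideanSpace.proj i : E2 →L[ℝ] ℝ).contDiff.comp hW
  set d : Fin 2 → E2 → ℝ :=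
    fun i x => fderiv ℝ (fun y => W y i) x (EuclideanSpace.single i 1) with hd
  have hdiv : ∀ x, div2 W x = d 0 x + d 1 x := by
    intro x
    rw [div2, Fin.sum_univ_two, hd]
    simp only
    rw [fderiv_coord _ _ (hW.differentiable (by simp) x),
      fderiv_coord _ _ (hW.differentiable (by simp) x)]
  have hcont : ∀ i : Fin 2, Continuous (d i) := fun i =>
    ((hu i).continuous_fderiv (by simp)).clm_apply continuous_const
  have hint : ∀ i : Fin 2, IntegrableOn (d i) cell2 volume := fun i =>
    (hcont i).continuousOn.integrableOn_compact isCompact_cell2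
  have hsplit : ∫ x in cell2, div2 W x = (∫ x in cell2, d 0 x) + ∫ x in cell2, d 1 x := by
    rw [← integral_add (hint 0) (hint 1)]
    exact setIntegral_congr_fun measurableSet_cell2 fun x _ => hdiv x
  have h1 : ∫ x in cell2, d 1 x = 0 := by
    rw [setIntegral_cell2 _ (hcont 1)]
    have key : ∀ a : ℝ, ∫ b in Icc (0:ℝ) 1, d 1 (toE2 a b) = 0 := by
      intro a
      have heq : ∀ b ∈ Icc (0:ℝ) 1, d 1 (toE2 a b)
          = fderiv ℝ (fun y => W y 1) (toE2 a 0 + b • EuclideanSpace.single 1 (1:ℝ))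
              (EuclideanSpace.single 1 1) := by
        intro b _
        rw [hd]; simp only; rw [← toE2_line1]
      rw [setIntegral_congr_fun measurableSet_Icc heq]
      exact integral_line_deriv_zero _ (hu 1) _ _ (fun y => by rw [hper y 1])
    simp only [key, integral_zero]
  have h0 : ∫ x in cell2, d 0 x = 0 := by
    rw [setIntegral_cell2' _ (hcont 0)]
    have key : ∀ b : ℝ, ∫ a in Icc (0:ℝ) 1, d 0 (toE2 a b) = 0 := by
      intro b
      have heq : ∀ a ∈ Icc (0:ℝ) 1, d 0 (toE2 a b)
          = fderiv ℝ (fun y => W y 0) (toE2 0 b + a • EuclideanSpace.single 0 (1:ℝ))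
              (EuclideanSpace.single 0 1) := by
        intro a _
        rw [hd]; simp only; rw [← toE2_line0]
      rw [setIntegral_congr_fun measurableSet_Icc heq]
      exact integral_line_deriv_zero _ (hu 0) _ _ (fun y => by rw [hper y 0])
    simp only [key, integral_zero]
  rw [hsplit, h0, h1, add_zero]

end HughesAux

open HughesAux

/-- **Energy identity for the viscous generalized Hughes system.**
If `ρ, φ` are smooth, `ℤ²`-periodic in space, `0 < ρ < ρ_m`, and on `[0,T] × ℝ²`
solve the Fokker–Planck equation `∂_t ρ = div(ρ f(ρ)^β ∇φ) + σΔρ` and the HJB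
equation `∂_t φ = ½ f(ρ)^β ‖∇φ‖² − ½ f(ρ)^(2−β) − σΔφ` with `f(ρ) = ρ_m − ρ`, then
`∫ φ(0)ρ(0) = ∫ φ(T)ρ(T) + ∫₀ᵀ ∫ ρ (½ f(ρ)^β ‖∇φ‖² + ½ f(ρ)^(2−β))`. -/
theorem energy_identity_generalized_hughes
    (ρm β σ T : ℝ) (hρm : 0 < ρm) (hβ : β ∈ Set.Icc (0:ℝ) 2) (hσ : 0 ≤ σ) (hT : 0 < T)
    (ρ φ : ℝ → EuclideanSpace ℝ (Fin 2) → ℝ)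
    (hρsmooth : ContDiff ℝ (⊤ : ℕ∞) (Function.uncurry ρ))
    (hφsmooth : ContDiff ℝ (⊤ : ℕ∞) (Function.uncurry φ))
    (hρper : ∀ (t : ℝ) (x : EuclideanSpace ℝ (Fin 2)) (k : Fin 2 → ℤ),
      ρ t (x + (EuclideanSpace.equiv (Fin 2) ℝ).symm fun i => (k i : ℝ)) = ρ t x)
    (hφper : ∀ (t : ℝ) (x : EuclideanSpace ℝ (Fin 2)) (k : Fin 2 → ℤ),
      φ t (x + (EuclideanSpace.equiv (Fin 2) ℝ).symm fun i => (k i : ℝ)) = φ t x)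
    (hρbound : ∀ (t : ℝ) (x : EuclideanSpace ℝ (Fin 2)), ρ t x ∈ Set.Ioo 0 ρm)
    (hFP : ∀ t ∈ Set.Icc (0:ℝ) T, ∀ x : EuclideanSpace ℝ (Fin 2),
      deriv (fun s => ρ s x) t
        = div2 (fun y => (ρ t y * (ρm - ρ t y) ^ β) • gradient (φ t) y) x
          + σ * lap2 (ρ t) x)
    (hHJB : ∀ t ∈ Set.Icc (0:ℝ) T, ∀ x : EuclideanSpace ℝ (Fin 2),
      deriv (fun s => φ s x) t
        = (1/2) * (ρm - ρ t x) ^ β * ‖gradient (φ t) x‖ ^ 2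
          - (1/2) * (ρm - ρ t x) ^ (2 - β) - σ * lap2 (φ t) x) :
    ∫ x in cell2, φ 0 x * ρ 0 x
      = (∫ x in cell2, φ T x * ρ T x)
        + ∫ t in (0:ℝ)..T, ∫ x in cell2,
            ρ t x * ((1/2) * (ρm - ρ t x) ^ β * ‖gradient (φ t) x‖ ^ 2
              + (1/2) * (ρm - ρ t x) ^ (2 - β)) := by
  
  classical
  have hT0 : (0:ℝ) ≤ T := hT.le
  -- smoothness of time slices
  have hρt : ∀ t : ℝ, ContDiff ℝ (⊤ : ℕ∞) (ρ t) := fun t =>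
    hρsmooth.comp ((contDiff_const (c := t)).prodMk contDiff_id)
  have hφt : ∀ t : ℝ, ContDiff ℝ (⊤ : ℕ∞) (φ t) := fun t =>
    hφsmooth.comp ((contDiff_const (c := t)).prodMk contDiff_id)
  have hfpos : ∀ (t : ℝ) (x : EuclideanSpace ℝ (Fin 2)), (0:ℝ) < ρm - ρ t x :=
    fun t x => sub_pos.2 (hρbound t x).2
  have hfβ : ∀ (γ t : ℝ), ContDiff ℝ (⊤ : ℕ∞) (fun x : EuclideanSpace ℝ (Fin 2) => (ρm - ρ t x) ^ γ) := by
    intro γ t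
    rw [contDiff_iff_contDiffAt]
    intro x
    exact (Real.contDiffAt_rpow_const_of_ne (ne_of_gt (hfpos t x))).comp x
      ((contDiff_const.sub (hρt t)).contDiffAt)
  have hgφ : ∀ t : ℝ, ContDiff ℝ (⊤ : ℕ∞) (gradient (φ t)) := fun t => contDiff_gradient _ (hφt t)
  have hgρ : ∀ t : ℝ, ContDiff ℝ (⊤ : ℕ∞) (gradient (ρ t)) := fun t => contDiff_gradient _ (hρt t)
  have hVsm : ∀ t : ℝ, ContDiff ℝ (⊤ : ℕ∞)
      (fun y => (ρ t y * (ρm - ρ t y) ^ β) • gradient (φ t) y) :=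
    fun t => ((hρt t).mul (hfβ β t)).smul (hgφ t)
  -- the flux vector field
  set W : ℝ → EuclideanSpace ℝ (Fin 2) → EuclideanSpace ℝ (Fin 2) := fun t x =>
    φ t x • ((ρ t x * (ρm - ρ t x) ^ β) • gradient (φ t) x)
      + σ • (φ t x • gradient (ρ t) x - ρ t x • gradient (φ t) x) with hWdef
  have hWsm : ∀ t : ℝ, ContDiff ℝ (⊤ : ℕ∞) (W t) := by
    intro t
    simp only [hWdef]
    exact ((hφt t).smul (hVsm t)).add
      ((((hφt t).smul (hgρ t)).sub ((hρt t).smul (hgφ t))).const_smul σ)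
  -- periodicity
  have hφper1 : ∀ (t : ℝ) x (i : Fin 2),
      φ t (x + EuclideanSpace.single i 1) = φ t x := by
    intro t x i
    have h := hφper t x (Pi.single i 1)
    rwa [single_eq_intvec] at h
  have hρper1 : ∀ (t : ℝ) x (i : Fin 2),
      ρ t (x + EuclideanSpace.single i 1) = ρ t x := by
    intro t x i
    have h := hρper t x (Pi.single i 1)
    rwa [single_eq_intvec] at h
  have hgφper : ∀ (t : ℝ) x (i : Fin 2),
      gradient (φ t) (x + EuclideanSpace.single i 1) = gradient (φ t) x :=
    fun t x i => gradient_shift _ ((hφt t).differentiable (by simp)) _ (fun y => hφper1 t y i) x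
  have hgρper : ∀ (t : ℝ) x (i : Fin 2),
      gradient (ρ t) (x + EuclideanSpace.single i 1) = gradient (ρ t) x :=
    fun t x i => gradient_shift _ ((hρt t).differentiable (by simp)) _ (fun y => hρper1 t y i) x
  have hWper : ∀ (t : ℝ) x (i : Fin 2), W t (x + EuclideanSpace.single i 1) = W t x := by
    intro t x i
    simp only [hWdef]
    rw [hφper1 t x i, hρper1 t x i, hgφper t x i, hgρper t x i]
  -- divergence expansion
  have hdivW : ∀ (t : ℝ) x, div2 (W t) x
      = (ρ t x * (ρm - ρ t x) ^ β) * ‖gradient (φ t) x‖ ^ 2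
        + φ t x * div2 (fun y => (ρ t y * (ρm - ρ t y) ^ β) • gradient (φ t) y) x
        + σ * (φ t x * lap2 (ρ t) x - ρ t x * lap2 (φ t) x) := by
    intro t x
    have dφ : DifferentiableAt ℝ (φ t) x := (hφt t).differentiable (by simp) x
    have dρ : DifferentiableAt ℝ (ρ t) x := (hρt t).differentiable (by simp) x
    have dV : DifferentiableAt ℝ
        (fun y => (ρ t y * (ρm - ρ t y) ^ β) • gradient (φ t) y) x :=
      (hVsm t).differentiable (by simp) x
    have dgφ : DifferentiableAt ℝ (gradient (φ t)) x := (hgφ t).differentiable (by simp) x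
    have dgρ : DifferentiableAt ℝ (gradient (ρ t)) x := (hgρ t).differentiable (by simp) x
    have dA : DifferentiableAt ℝ
        (fun y => φ t y • ((ρ t y * (ρm - ρ t y) ^ β) • gradient (φ t) y)) x := dφ.smul dV
    have dC : DifferentiableAt ℝ
        (fun y => φ t y • gradient (ρ t) y - ρ t y • gradient (φ t) y) x :=
      (dφ.smul dgρ).sub (dρ.smul dgφ)
    have dB : DifferentiableAt ℝ
        (fun y => σ • (φ t y • gradient (ρ t) y - ρ t y • gradient (φ t) y)) x :=
      dC.const_smul σ
    simp only [hWdef]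
    rw [div2_add _ _ x dA dB, div2_smul _ _ x dφ dV, div2_const_smul σ _ x dC,
      div2_sub (fun y => φ t y • gradient (ρ t) y) (fun y => ρ t y • gradient (φ t) y) x (dφ.smul dgρ) (dρ.smul dgφ),
      div2_smul _ _ x dφ dgρ, div2_smul _ _ x dρ dgφ,
      div2_gradient _ (hρt t) x, div2_gradient _ (hφt t) x]
    rw [real_inner_smul_right, real_inner_self_eq_norm_sq,
      real_inner_comm (gradient (ρ t) x) (gradient (φ t) x)]
    ring
  -- pointwise time-derivative identity
  have hpoint : ∀ t ∈ Icc (0:ℝ) T, ∀ x, deriv (fun s => φ s x * ρ s x) t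
      = div2 (W t) x - ρ t x * ((1/2) * (ρm - ρ t x) ^ β * ‖gradient (φ t) x‖ ^ 2
          + (1/2) * (ρm - ρ t x) ^ (2 - β)) := by
    intro t ht x
    have hdφ : DifferentiableAt ℝ (fun s => φ s x) t :=
      ((hφsmooth.differentiable (by simp)).comp
        ((differentiable_id).prodMk (differentiable_const x))) t
    have hdρ : DifferentiableAt ℝ (fun s => ρ s x) t :=
      ((hρsmooth.differentiable (by simp)).comp
        ((differentiable_id).prodMk (differentiable_const x))) t
    rw [deriv_fun_mul hdφ hdρ, hHJB t ht x, hFP t ht x, hdivW t x]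
    ring
  -- smoothness of the product, and its time derivative
  have hPsm : ContDiff ℝ (⊤ : ℕ∞) (Function.uncurry fun t x => φ t x * ρ t x) :=
    hφsmooth.mul hρsmooth
  have hPtd : ∀ (t : ℝ) x, HasDerivAt (fun s => φ s x * ρ s x)
      (fderiv ℝ (Function.uncurry fun s y => φ s y * ρ s y) (t, x) (1, 0)) t := by
    intro t x
    have h1 := ((hPsm.differentiable (by simp)) (t, x)).hasFDerivAt
    have h2 : HasDerivAt (fun s : ℝ => (s, x)) ((1:ℝ), (0 : EuclideanSpace ℝ (Fin 2))) t :=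
      (hasDerivAt_id t).prodMk (hasDerivAt_const t x)
    exact h1.comp_hasDerivAt t h2
  have hPt_eq : ∀ (t : ℝ) x, deriv (fun s => φ s x * ρ s x) t
      = fderiv ℝ (Function.uncurry fun s y => φ s y * ρ s y) (t, x) (1, 0) :=
    fun t x => (hPtd t x).deriv
  have hPtcont : Continuous (Function.uncurry fun t x => deriv (fun s => φ s x * ρ s x) t) := by
    have h : (Function.uncurry fun t x => deriv (fun s => φ s x * ρ s x) t)
        = fun p : ℝ × EuclideanSpace ℝ (Fin 2) =>
            fderiv ℝ (Function.uncurry fun s y => φ s y * ρ s y) p (1, 0) := by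
      funext p
      exact hPt_eq p.1 p.2
    rw [h]
    exact (hPsm.continuous_fderiv (by simp)).clm_apply continuous_const
  -- derivative of the energy
  have hEderiv : ∀ t : ℝ, HasDerivAt (fun τ => ∫ x in cell2, φ τ x * ρ τ x)
      (∫ x in cell2, deriv (fun s => φ s x * ρ s x) t) t := by
    intro t
    obtain ⟨C, hC⟩ := ((isCompact_closedBall t 1).prod isCompact_cell2).exists_bound_of_continuousOn
      hPtcont.continuousOn
    have key := hasDerivAt_integral_of_dominated_loc_of_deriv_le
      (μ := volume.restrict cell2)
      (F := fun τ x => φ τ x * ρ τ x)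
      (F' := fun τ x => deriv (fun s => φ s x * ρ s x) τ)
      (x₀ := t) (bound := fun _ => C) (s := Metric.ball t 1) (Metric.ball_mem_nhds t one_pos)
      (Filter.Eventually.of_forall fun τ =>
        (((hφt τ).continuous.mul (hρt τ).continuous)).aestronglyMeasurable)
      ((((hφt t).continuous.mul (hρt t).continuous)).continuousOn.integrableOn_compact
        isCompact_cell2)
      ((hPtcont.comp (continuous_const.prodMk continuous_id)).aestronglyMeasurable)
      ?_ ?_ ?_
    · exact key.2
    · -- bound
      filter_upwards [ae_restrict_mem measurableSet_cell2] with x hx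
      intro τ hτ
      exact hC (τ, x) ⟨Metric.ball_subset_closedBall hτ, hx⟩
    · exact (integrableOn_const_iff).mpr (Or.inr isCompact_cell2.measure_lt_top)
    · refine Filter.Eventually.of_forall fun x => fun τ _ => ?_
      have hdiff : DifferentiableAt ℝ (fun s => φ s x * ρ s x) τ := (hPtd τ x).differentiableAt
      exact hdiff.hasDerivAt
  -- continuity of the derivative of the energy
  have hGcont : Continuous fun t => ∫ x in cell2, deriv (fun s => φ s x * ρ s x) t :=
    continuous_parametric_integral_of_continuous hPtcont isCompact_cell2
  -- fundamental theorem of calculus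
  have hFTC : ∫ t in (0:ℝ)..T, (∫ x in cell2, deriv (fun s => φ s x * ρ s x) t)
      = (∫ x in cell2, φ T x * ρ T x) - ∫ x in cell2, φ 0 x * ρ 0 x :=
    intervalIntegral.integral_eq_sub_of_hasDerivAt (fun t _ => hEderiv t)
      (hGcont.intervalIntegrable 0 T)
  -- the spatial identity on [0, T]
  have hspace : ∀ t ∈ Icc (0:ℝ) T,
      (∫ x in cell2, deriv (fun s => φ s x * ρ s x) t)
        = - ∫ x in cell2, ρ t x * ((1/2) * (ρm - ρ t x) ^ β * ‖gradient (φ t) x‖ ^ 2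
            + (1/2) * (ρm - ρ t x) ^ (2 - β)) := by
    intro t ht
    have hRcont : Continuous (fun x => ρ t x * ((1/2) * (ρm - ρ t x) ^ β
        * ‖gradient (φ t) x‖ ^ 2 + (1/2) * (ρm - ρ t x) ^ (2 - β))) := by
      refine ((hρt t).continuous).mul (Continuous.add ?_ ?_)
      · exact (continuous_const.mul (hfβ β t).continuous).mul
          (((hgφ t).continuous.norm).pow 2)
      · exact continuous_const.mul (hfβ (2 - β) t).continuous
    have hint1 : IntegrableOn (div2 (W t)) cell2 volume :=
      (continuous_div2 _ (hWsm t)).continuousOn.integrableOn_compact isCompact_cell2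
    have hint2 : IntegrableOn (fun x => ρ t x * ((1/2) * (ρm - ρ t x) ^ β
        * ‖gradient (φ t) x‖ ^ 2 + (1/2) * (ρm - ρ t x) ^ (2 - β))) cell2 volume :=
      hRcont.continuousOn.integrableOn_compact isCompact_cell2
    calc ∫ x in cell2, deriv (fun s => φ s x * ρ s x) t
        = ∫ x in cell2, (div2 (W t) x - ρ t x * ((1/2) * (ρm - ρ t x) ^ β
            * ‖gradient (φ t) x‖ ^ 2 + (1/2) * (ρm - ρ t x) ^ (2 - β))) :=
          setIntegral_congr_fun measurableSet_cell2 fun x _ => hpoint t ht x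
      _ = (∫ x in cell2, div2 (W t) x) - ∫ x in cell2, ρ t x * ((1/2) * (ρm - ρ t x) ^ β
            * ‖gradient (φ t) x‖ ^ 2 + (1/2) * (ρm - ρ t x) ^ (2 - β)) :=
          integral_sub hint1 hint2
      _ = - ∫ x in cell2, ρ t x * ((1/2) * (ρm - ρ t x) ^ β
            * ‖gradient (φ t) x‖ ^ 2 + (1/2) * (ρm - ρ t x) ^ (2 - β)) := by
          rw [setIntegral_div2_zero _ (hWsm t) (fun x i => hWper t x i), zero_sub]
  -- put everything together
  have hcongr : ∫ t in (0:ℝ)..T, (∫ x in cell2, deriv (fun s => φ s x * ρ s x) t)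
      = ∫ t in (0:ℝ)..T, - ∫ x in cell2, ρ t x * ((1/2) * (ρm - ρ t x) ^ β
          * ‖gradient (φ t) x‖ ^ 2 + (1/2) * (ρm - ρ t x) ^ (2 - β)) := by
    apply intervalIntegral.integral_congr
    intro t ht
    rw [uIcc_of_le hT0] at ht
    exact hspace t ht
  rw [hcongr, intervalIntegral.integral_neg] at hFTC
  linarith [hFTC]
end

section
/- Let ρ_m > 0, β ∈ [0,2], σ ≥ 0, T > 0, and let ρ, φ : ℝ × ℝ² → ℝ be smooth functions that are ℤ²-periodic in the space variable, with 0 < ρ(t,x) < ρ_m for all (t,x), and such that on [0,T] × ℝ² the density equation ∂_t ρ = div( ρ f(ρ)^{β} ∇φ ) + σ Δρ holds, where f(ρ) = ρ_m − ρ. Then (1/2) ∫_{[0,1]²} (ρ_m − ρ(T,x))² dx + ∫_0^T ∫_{[0,1]²} ρ f(ρ)^{β} ⟨∇φ, ∇ρ⟩ dx dt + σ ∫_0^T ∫_{[0,1]²} ‖∇ρ‖² dx dt = (1/2) ∫_{[0,1]²} (ρ_m − ρ(0,x))² dx. -/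
open Real Set MeasureTheory
open scoped RealInnerProductSpace

lemma cell2_preimage : (⇑(EuclideanSpace.equiv (Fin 2) ℝ).symm) ⁻¹' cell2 = Icc (0 : Fin 2 → ℝ) 1 := by
  ext y
  simp only [mem_preimage, cell2, mem_setOf_eq, mem_Icc, Pi.le_def]
  constructor
  · intro h; exact ⟨fun i => (h i).1, fun i => (h i).2⟩
  · intro h i; exact ⟨h.1 i, h.2 i⟩

lemma cell2_image : cell2 = (⇑(EuclideanSpace.equiv (Fin 2) ℝ).symm) '' Icc (0 : Fin 2 → ℝ) 1 := by
  rw [← cell2_preimage]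
  exact (Set.image_preimage_eq cell2 (EuclideanSpace.equiv (Fin 2) ℝ).symm.surjective).symm

lemma isCompact_cell2 : IsCompact cell2 := by
  rw [cell2_image]
  exact isCompact_Icc.image (EuclideanSpace.equiv (Fin 2) ℝ).symm.continuous

lemma measurableSet_cell2 : MeasurableSet cell2 :=
  (isCompact_cell2.isClosed).measurableSet

lemma cell2_integral_transfer (g : EuclideanSpace ℝ (Fin 2) → ℝ) :
    ∫ x in cell2, g x = ∫ y in Icc (0 : Fin 2 → ℝ) 1, g ((EuclideanSpace.equiv (Fin 2) ℝ).symm y) := by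
  rw [← cell2_preimage]
  exact ((EuclideanSpace.volume_preserving_symm_measurableEquiv_toLp (Fin 2)).symm
    (MeasurableEquiv.toLp 2 (Fin 2 → ℝ)).symm).setIntegral_preimage_emb
    (MeasurableEquiv.toLp 2 (Fin 2 → ℝ)).measurableEmbedding g cell2 |>.symm

lemma insertNth_one_eq (i : Fin 2) (x : Fin 1 → ℝ) :
    (Fin.insertNth i (1:ℝ) x : Fin 2 → ℝ) = (Fin.insertNth i (0:ℝ) x : Fin 2 → ℝ) + Pi.single i 1 := by
  funext j
  rcases eq_or_ne j i with rfl | hj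
  · simp
  · obtain ⟨j', rfl⟩ := Fin.exists_succAbove_eq hj
    simp [Fin.insertNth_apply_succAbove, Pi.single_apply,
      (Fin.succAbove_ne i j').symm, Pi.add_apply]

lemma continuous_div2 (W : EuclideanSpace ℝ (Fin 2) → EuclideanSpace ℝ (Fin 2))
    (hW : ContDiff ℝ (⊤ : ℕ∞) W) : Continuous (div2 W) := by
  apply continuous_finset_sum
  intro i _
  exact ((EuclideanSpace.proj (𝕜 := ℝ) i).continuous).comp
    ((hW.continuous_fderiv (by simp)).clm_apply continuous_const)

lemma integral_div2_zero (W : EuclideanSpace ℝ (Fin 2) → EuclideanSpace ℝ (Fin 2))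
    (hW : ContDiff ℝ (⊤ : ℕ∞) W)
    (hper : ∀ (x : EuclideanSpace ℝ (Fin 2)) (j : Fin 2),
      W (x + EuclideanSpace.single j 1) = W x) :
    ∫ x in cell2, div2 W x = 0 := by
  set eq := EuclideanSpace.equiv (Fin 2) ℝ with heq
  set f : (Fin 2 → ℝ) → (Fin 2 → ℝ) := fun y => eq (W (eq.symm y)) with hf
  set f' : (Fin 2 → ℝ) → (Fin 2 → ℝ) →L[ℝ] (Fin 2 → ℝ) := fun y =>
    ((eq : EuclideanSpace ℝ (Fin 2) →L[ℝ] (Fin 2 → ℝ)).comp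
      ((fderiv ℝ W (eq.symm y)).comp
        ((eq.symm : (Fin 2 → ℝ) ≃L[ℝ] EuclideanSpace ℝ (Fin 2)) :
          (Fin 2 → ℝ) →L[ℝ] EuclideanSpace ℝ (Fin 2)))) with hf'
  have hdW : Differentiable ℝ W := hW.differentiable (by simp)
  have Hd : ∀ y : Fin 2 → ℝ, HasFDerivAt f (f' y) y := by
    intro y
    exact (eq.hasFDerivAt).comp _ (((hdW (eq.symm y)).hasFDerivAt).comp _ (eq.symm.hasFDerivAt))
  have key : ∀ y : Fin 2 → ℝ, (∑ i, f' y (Pi.single i 1) i) = div2 W (eq.symm y) := by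
    intro y; rfl
  have hcont : Continuous fun y : Fin 2 → ℝ => div2 W (eq.symm y) :=
    (continuous_div2 W hW).comp eq.symm.continuous
  rw [cell2_integral_transfer]
  have hdiv := MeasureTheory.integral_divergence_of_hasFDerivAt_off_countable
    (a := (0 : Fin 2 → ℝ)) (b := (1 : Fin 2 → ℝ)) (by intro i; norm_num) f f' ∅ countable_empty
    ((eq.continuous.comp (hW.continuous.comp eq.symm.continuous)).continuousOn)
    (fun x _ => Hd x)
    (by
      apply ContinuousOn.integrableOn_compact isCompact_Icc
      exact hcont.continuousOn.congr fun y _ => key y)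
  rw [show (fun y : Fin 2 → ℝ => div2 W (eq.symm y)) = fun y => ∑ i, f' y (Pi.single i 1) i
      from funext fun y => (key y).symm]
  rw [hdiv]
  have hface : ∀ (i : Fin 2) (x : Fin 1 → ℝ),
      f (Fin.insertNth i (1:ℝ) x) = f (Fin.insertNth i (0:ℝ) x) := by
    intro i x
    have h1 : (Fin.insertNth i (1:ℝ) x : Fin 2 → ℝ) =
        (Fin.insertNth i (0:ℝ) x : Fin 2 → ℝ) + Pi.single i 1 := insertNth_one_eq i x
    show eq (W (eq.symm (Fin.insertNth i (1:ℝ) x))) = eq (W (eq.symm (Fin.insertNth i (0:ℝ) x)))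
    rw [h1, map_add, show eq.symm (Pi.single i 1) = EuclideanSpace.single i 1 from rfl, hper]
  apply Finset.sum_eq_zero
  intro i _
  rw [sub_eq_zero]
  apply setIntegral_congr_fun (measurableSet_Icc)
  intro x _
  simp only [Pi.one_apply, Pi.zero_apply, hface i x]

lemma inner_gradient (g : EuclideanSpace ℝ (Fin 2) → ℝ) (x v : EuclideanSpace ℝ (Fin 2)) :
    ⟪gradient g x, v⟫ = fderiv ℝ g x v :=
  InnerProductSpace.toDual_symm_apply

lemma euclid_decomp (w : EuclideanSpace ℝ (Fin 2)) :
    w = ∑ i, w i • EuclideanSpace.single i 1 := by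
  have h := (EuclideanSpace.basisFun (Fin 2) ℝ).sum_repr w
  simp only [EuclideanSpace.basisFun_apply, EuclideanSpace.basisFun_repr] at h
  exact h.symm

lemma contDiff_gradient (u : EuclideanSpace ℝ (Fin 2) → ℝ) (hu : ContDiff ℝ (⊤ : ℕ∞) u) :
    ContDiff ℝ (⊤ : ℕ∞) (gradient u) :=
  ((InnerProductSpace.toDual ℝ (EuclideanSpace ℝ (Fin 2))).symm.contDiff).comp
    (hu.fderiv_right (by simp))

lemma div2_smul (g : EuclideanSpace ℝ (Fin 2) → ℝ) (V : EuclideanSpace ℝ (Fin 2) → EuclideanSpace ℝ (Fin 2))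
    (x : EuclideanSpace ℝ (Fin 2)) (hg : DifferentiableAt ℝ g x) (hV : DifferentiableAt ℝ V x) :
    div2 (fun y => g y • V y) x = g x * div2 V x + ⟪gradient g x, V x⟫ := by
  have h := (hg.hasFDerivAt.smul hV.hasFDerivAt).fderiv
  unfold div2
  rw [show (fun y => g y • V y) = g • V from rfl, h]
  have hsum : ∑ i, ((g x • fderiv ℝ V x + (fderiv ℝ g x).smulRight (V x))
      (EuclideanSpace.single i 1)) i
      = ∑ i, (g x * (fderiv ℝ V x (EuclideanSpace.single i 1)) i
          + fderiv ℝ g x (EuclideanSpace.single i 1) * (V x) i) := by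
    refine Finset.sum_congr rfl fun i _ => ?_
    simp [ContinuousLinearMap.add_apply, ContinuousLinearMap.smul_apply,
      ContinuousLinearMap.smulRight_apply]
  rw [hsum, Finset.sum_add_distrib, ← Finset.mul_sum]
  congr 1
  rw [inner_gradient]
  conv_rhs => rw [show V x = ∑ i, (V x) i • EuclideanSpace.single i 1 from euclid_decomp (V x)]
  rw [map_sum]
  refine Finset.sum_congr rfl fun i _ => ?_
  rw [_root_.map_smul, smul_eq_mul, mul_comm]

lemma lap2_eq_div2_gradient (u : EuclideanSpace ℝ (Fin 2) → ℝ) (hu : ContDiff ℝ (⊤ : ℕ∞) u)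
    (x : EuclideanSpace ℝ (Fin 2)) : lap2 u x = div2 (gradient u) x := by
  unfold lap2 div2
  refine Finset.sum_congr rfl fun i _ => ?_
  have h1 : (fun y => fderiv ℝ u y (EuclideanSpace.single i 1))
      = fun y => (EuclideanSpace.proj (𝕜 := ℝ) i) (gradient u y) := by
    funext y
    rw [show (EuclideanSpace.proj (𝕜 := ℝ) i) (gradient u y) = (gradient u y) i from rfl]
    rw [← inner_gradient]
    simp only [EuclideanSpace.inner_single_right, one_mul, conj_trivial]
  rw [h1, show (fun y => (EuclideanSpace.proj (𝕜 := ℝ) i) (gradient u y))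
      = (⇑(EuclideanSpace.proj (𝕜 := ℝ) i) ∘ gradient u) from rfl]
  rw [fderiv_comp x (EuclideanSpace.proj (𝕜 := ℝ) i).differentiableAt
    ((contDiff_gradient u hu).differentiable (by simp) x)]
  rw [ContinuousLinearMap.fderiv]; rfl

section translate
variable {F : Type*} [NormedAddCommGroup F] [NormedSpace ℝ F]

lemma fderiv_translate (f : EuclideanSpace ℝ (Fin 2) → F) (hf : Differentiable ℝ f)
    (c x : EuclideanSpace ℝ (Fin 2)) (h : ∀ y, f (y + c) = f y) :
    fderiv ℝ f (x + c) = fderiv ℝ f x := by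
  have h1 : HasFDerivAt (fun y => f (y + c))
      ((fderiv ℝ f (x + c)).comp (ContinuousLinearMap.id ℝ _)) x :=
    (hf (x + c)).hasFDerivAt.comp x ((hasFDerivAt_id x).add_const c)
  rw [ContinuousLinearMap.comp_id, show (fun y => f (y + c)) = f from funext h] at h1
  exact (h1.fderiv).symm ▸ ((hf x).hasFDerivAt.unique h1).symm

lemma gradient_translate (u : EuclideanSpace ℝ (Fin 2) → ℝ) (hu : Differentiable ℝ u)
    (c x : EuclideanSpace ℝ (Fin 2)) (h : ∀ y, u (y + c) = u y) :
    gradient u (x + c) = gradient u x := by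
  show (InnerProductSpace.toDual ℝ _).symm (fderiv ℝ u (x + c))
      = (InnerProductSpace.toDual ℝ _).symm (fderiv ℝ u x)
  rw [fderiv_translate u hu c x h]
end translate

lemma integrableOn_cell2 {g : EuclideanSpace ℝ (Fin 2) → ℝ} (hg : Continuous g) :
    IntegrableOn g cell2 :=
  hg.continuousOn.integrableOn_compact isCompact_cell2

lemma ibp (g : EuclideanSpace ℝ (Fin 2) → ℝ) (V : EuclideanSpace ℝ (Fin 2) → EuclideanSpace ℝ (Fin 2))
    (hg : ContDiff ℝ (⊤ : ℕ∞) g) (hV : ContDiff ℝ (⊤ : ℕ∞) V)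
    (hgp : ∀ (x : EuclideanSpace ℝ (Fin 2)) (j : Fin 2), g (x + EuclideanSpace.single j 1) = g x)
    (hVp : ∀ (x : EuclideanSpace ℝ (Fin 2)) (j : Fin 2), V (x + EuclideanSpace.single j 1) = V x) :
    ∫ x in cell2, g x * div2 V x = - ∫ x in cell2, ⟪gradient g x, V x⟫ := by
  have h0 : ∫ x in cell2, div2 (fun y => g y • V y) x = 0 :=
    integral_div2_zero _ (hg.smul hV) (by intro x j; simp only [hgp, hVp])
  have h1 : ∫ x in cell2, (g x * div2 V x + ⟪gradient g x, V x⟫) = 0 := by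
    rw [← h0]
    exact setIntegral_congr_fun measurableSet_cell2 fun x _ =>
      (div2_smul g V x (hg.differentiable (by simp) x) (hV.differentiable (by simp) x)).symm
  rw [integral_add (integrableOn_cell2 (g := fun x => g x * div2 V x) (hg.continuous.mul (continuous_div2 V hV)))
    (integrableOn_cell2 (((contDiff_gradient g hg).continuous).inner hV.continuous))] at h1
  linarith

lemma continuous_setIntegral_cell2 (F : ℝ → EuclideanSpace ℝ (Fin 2) → ℝ)
    (hF : Continuous (Function.uncurry F)) :
    Continuous fun t => ∫ x in cell2, F t x := by
  rw [continuous_iff_continuousAt]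
  intro t₀
  obtain ⟨C, hC⟩ := ((isCompact_Icc (a := t₀ - 1) (b := t₀ + 1)).prod
    isCompact_cell2).exists_bound_of_continuousOn hF.continuousOn
  apply continuousAt_of_dominated (bound := fun _ => C)
  · exact Filter.Eventually.of_forall fun t =>
      ((hF.comp (continuous_const.prodMk continuous_id)).aestronglyMeasurable)
  · filter_upwards [Icc_mem_nhds (by linarith : t₀ - 1 < t₀) (by linarith : t₀ < t₀ + 1)] with t ht
    refine (ae_restrict_iff' measurableSet_cell2).2 (Filter.Eventually.of_forall fun x hx => ?_)
    exact hC (t, x) ⟨ht, hx⟩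
  · exact integrableOn_const isCompact_cell2.measure_lt_top.ne
  · exact Filter.Eventually.of_forall fun x =>
      (hF.comp (continuous_id.prodMk continuous_const)).continuousAt

lemma hasDerivAt_setIntegral_cell2 (F F' : ℝ → EuclideanSpace ℝ (Fin 2) → ℝ) (t₀ : ℝ)
    (hFc : Continuous (Function.uncurry F)) (hF'c : Continuous (Function.uncurry F'))
    (hd : ∀ (t : ℝ) (x : EuclideanSpace ℝ (Fin 2)), HasDerivAt (fun s => F s x) (F' t x) t) :
    HasDerivAt (fun t => ∫ x in cell2, F t x) (∫ x in cell2, F' t₀ x) t₀ := by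
  obtain ⟨C, hC⟩ := ((isCompact_Icc (a := t₀ - 1) (b := t₀ + 1)).prod
    isCompact_cell2).exists_bound_of_continuousOn hF'c.continuousOn
  have hFt : ∀ t : ℝ, Continuous (F t) := fun t =>
    hFc.comp (continuous_const.prodMk continuous_id)
  have hF't : ∀ t : ℝ, Continuous (F' t) := fun t =>
    hF'c.comp (continuous_const.prodMk continuous_id)
  refine (hasDerivAt_integral_of_dominated_loc_of_deriv_le (bound := fun _ => C) (Metric.ball_mem_nhds t₀ one_pos)
    (Filter.Eventually.of_forall fun t => (hFt t).aestronglyMeasurable)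
    (integrableOn_cell2 (hFt t₀)) ((hF't t₀).aestronglyMeasurable)
    ?_ (integrableOn_const isCompact_cell2.measure_lt_top.ne)
    ?_).2
  · refine (ae_restrict_iff' measurableSet_cell2).2 (Filter.Eventually.of_forall fun x hx t ht => ?_)
    refine hC (t, x) ⟨?_, hx⟩
    have := Metric.mem_ball.mp ht
    rw [Real.dist_eq] at this
    constructor <;> [linarith [abs_lt.mp this] ; linarith [(abs_lt.mp this).2]]
  · exact Filter.Eventually.of_forall fun x t _ => hd t x

/-- **L²-energy identity for the Fokker–Planck part of the viscous generalized
Hughes system.**  If `ρ, φ` are smooth, `ℤ²`-periodic in space, `0 < ρ < ρ_m`, and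
on `[0,T] × ℝ²` the density equation `∂_t ρ = div(ρ f(ρ)^β ∇φ) + σΔρ` holds with
`f(ρ) = ρ_m − ρ`, then
`½ ∫ (ρ_m − ρ(T))² + ∫₀ᵀ ∫ ρ f(ρ)^β ⟨∇φ, ∇ρ⟩ + σ ∫₀ᵀ ∫ ‖∇ρ‖² = ½ ∫ (ρ_m − ρ(0))²`. -/
theorem density_L2_identity_generalized_hughes
    (ρm β σ T : ℝ) (hρm : 0 < ρm) (hβ : β ∈ Set.Icc (0:ℝ) 2) (hσ : 0 ≤ σ) (hT : 0 < T)
    (ρ φ : ℝ → EuclideanSpace ℝ (Fin 2) → ℝ)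
    (hρsmooth : ContDiff ℝ (⊤ : ℕ∞) (Function.uncurry ρ))
    (hφsmooth : ContDiff ℝ (⊤ : ℕ∞) (Function.uncurry φ))
    (hρper : ∀ (t : ℝ) (x : EuclideanSpace ℝ (Fin 2)) (k : Fin 2 → ℤ),
      ρ t (x + (EuclideanSpace.equiv (Fin 2) ℝ).symm fun i => (k i : ℝ)) = ρ t x)
    (hφper : ∀ (t : ℝ) (x : EuclideanSpace ℝ (Fin 2)) (k : Fin 2 → ℤ),
      φ t (x + (EuclideanSpace.equiv (Fin 2) ℝ).symm fun i => (k i : ℝ)) = φ t x)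
    (hρbound : ∀ (t : ℝ) (x : EuclideanSpace ℝ (Fin 2)), ρ t x ∈ Set.Ioo 0 ρm)
    (hFP : ∀ t ∈ Set.Icc (0:ℝ) T, ∀ x : EuclideanSpace ℝ (Fin 2),
      deriv (fun s => ρ s x) t
        = div2 (fun y => (ρ t y * (ρm - ρ t y) ^ β) • gradient (φ t) y) x
          + σ * lap2 (ρ t) x) :
    (1/2) * (∫ x in cell2, (ρm - ρ T x) ^ 2)
      + (∫ t in (0:ℝ)..T, ∫ x in cell2,
          ρ t x * (ρm - ρ t x) ^ β * ⟪gradient (φ t) x, gradient (ρ t) x⟫)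
      + σ * ∫ t in (0:ℝ)..T, ∫ x in cell2, ‖gradient (ρ t) x‖ ^ 2
      = (1/2) * ∫ x in cell2, (ρm - ρ 0 x) ^ 2 := by
  -- slice smoothness
  have hρt : ∀ t, ContDiff ℝ (⊤ : ℕ∞) (ρ t) := fun t =>
    hρsmooth.comp ((contDiff_const (c := t)).prodMk contDiff_id)
  have hφt : ∀ t, ContDiff ℝ (⊤ : ℕ∞) (φ t) := fun t =>
    hφsmooth.comp ((contDiff_const (c := t)).prodMk contDiff_id)
  -- the coefficient and vector field
  set a : ℝ → EuclideanSpace ℝ (Fin 2) → ℝ := fun t x => ρ t x * (ρm - ρ t x) ^ β with ha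
  set V : ℝ → EuclideanSpace ℝ (Fin 2) → EuclideanSpace ℝ (Fin 2) :=
    fun t y => a t y • gradient (φ t) y with hV
  have hat : ∀ t, ContDiff ℝ (⊤ : ℕ∞) (a t) := by
    intro t
    rw [contDiff_iff_contDiffAt]
    intro x
    refine ((hρt t).contDiffAt).mul ?_
    exact (Real.contDiffAt_rpow_const_of_ne
      (ne_of_gt (sub_pos.2 (hρbound t x).2))).comp x ((contDiff_const.sub (hρt t)).contDiffAt)
  have hVt : ∀ t, ContDiff ℝ (⊤ : ℕ∞) (V t) := fun t =>
    (hat t).smul (contDiff_gradient _ (hφt t))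
  -- single-step periodicity
  have hsingle : ∀ j : Fin 2, ((EuclideanSpace.equiv (Fin 2) ℝ).symm
      fun i => (((Pi.single j 1 : Fin 2 → ℤ)) i : ℝ)) = EuclideanSpace.single j 1 := by
    intro j
    have : (fun i => (((Pi.single j 1 : Fin 2 → ℤ)) i : ℝ)) = Pi.single j (1:ℝ) := by
      funext i
      rcases eq_or_ne i j with rfl | h
      · simp
      · simp [Pi.single_apply, h]
    rw [this]; rfl
  have hρp1 : ∀ (t : ℝ) (x) (j : Fin 2), ρ t (x + EuclideanSpace.single j 1) = ρ t x := by
    intro t x j; rw [← hsingle j]; exact hρper t x (Pi.single j 1)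
  have hφp1 : ∀ (t : ℝ) (x) (j : Fin 2), φ t (x + EuclideanSpace.single j 1) = φ t x := by
    intro t x j; rw [← hsingle j]; exact hφper t x (Pi.single j 1)
  have hgradρp : ∀ (t : ℝ) (x) (j : Fin 2),
      gradient (ρ t) (x + EuclideanSpace.single j 1) = gradient (ρ t) x := fun t x j =>
    gradient_translate _ ((hρt t).differentiable (by simp)) _ x (fun y => hρp1 t y j)
  have hgradφp : ∀ (t : ℝ) (x) (j : Fin 2),
      gradient (φ t) (x + EuclideanSpace.single j 1) = gradient (φ t) x := fun t x j =>
    gradient_translate _ ((hφt t).differentiable (by simp)) _ x (fun y => hφp1 t y j)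
  have hVp : ∀ (t : ℝ) (x) (j : Fin 2), V t (x + EuclideanSpace.single j 1) = V t x := by
    intro t x j
    simp only [hV, ha, hρp1, hgradφp]
  -- time derivative
  set Dρ : ℝ → EuclideanSpace ℝ (Fin 2) → ℝ :=
    fun t x => fderiv ℝ (Function.uncurry ρ) (t, x) (1, 0) with hDρ
  have hder : ∀ (t : ℝ) (x), HasDerivAt (fun s => ρ s x) (Dρ t x) t := by
    intro t x
    have h := (hρsmooth.differentiable (by simp) (t, x)).hasFDerivAt
    exact h.comp_hasDerivAt t ((hasDerivAt_id t).prodMk (hasDerivAt_const t x))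
  have hDρcont : Continuous (Function.uncurry Dρ) :=
    (hρsmooth.continuous_fderiv (by simp)).clm_apply continuous_const
  -- energy and its derivative
  set F : ℝ → EuclideanSpace ℝ (Fin 2) → ℝ := fun t x => (ρm - ρ t x) ^ 2 with hF
  set F' : ℝ → EuclideanSpace ℝ (Fin 2) → ℝ := fun t x => 2 * (ρm - ρ t x) * (-(Dρ t x)) with hF'
  have hFc : Continuous (Function.uncurry F) :=
    (continuous_const.sub hρsmooth.continuous).pow 2
  have hF'c : Continuous (Function.uncurry F') :=
    (continuous_const.mul (continuous_const.sub hρsmooth.continuous)).mul hDρcont.neg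
  have hdF : ∀ (t : ℝ) (x), HasDerivAt (fun s => F s x) (F' t x) t := by
    intro t x
    have h : HasDerivAt (fun s => (ρm - ρ s x) ^ 2) _ t := ((hder t x).const_sub ρm).pow 2
    show HasDerivAt (fun s => (ρm - ρ s x) ^ 2) (2 * (ρm - ρ t x) * (-(Dρ t x))) t
    convert h using 1
    push_cast
    ring
  have hE : ∀ t : ℝ, HasDerivAt (fun t => ∫ x in cell2, F t x) (∫ x in cell2, F' t x) t :=
    fun t => hasDerivAt_setIntegral_cell2 F F' t hFc hF'c hdF
  -- joint continuity of gradients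
  have fderiv_slice : ∀ (u : ℝ → EuclideanSpace ℝ (Fin 2) → ℝ),
      ContDiff ℝ (⊤ : ℕ∞) (Function.uncurry u) → ∀ (t : ℝ) (x),
      fderiv ℝ (u t) x = (fderiv ℝ (Function.uncurry u) (t, x)).comp
        ((0 : EuclideanSpace ℝ (Fin 2) →L[ℝ] ℝ).prod (ContinuousLinearMap.id ℝ _)) := by
    intro u hu t x
    have h := (hu.differentiable (by simp) (t, x)).hasFDerivAt
    exact (h.comp x ((hasFDerivAt_const t x).prodMk (hasFDerivAt_id x))).fderiv
  have hgradc : ∀ (u : ℝ → EuclideanSpace ℝ (Fin 2) → ℝ),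
      ContDiff ℝ (⊤ : ℕ∞) (Function.uncurry u) →
      Continuous (fun p : ℝ × EuclideanSpace ℝ (Fin 2) => gradient (u p.1) p.2) := by
    intro u hu
    have heq : (fun p : ℝ × EuclideanSpace ℝ (Fin 2) => gradient (u p.1) p.2)
        = fun p => (InnerProductSpace.toDual ℝ (EuclideanSpace ℝ (Fin 2))).symm
            ((fderiv ℝ (Function.uncurry u) p).comp
              ((0 : EuclideanSpace ℝ (Fin 2) →L[ℝ] ℝ).prod (ContinuousLinearMap.id ℝ _))) := by
      funext p
      show (InnerProductSpace.toDual ℝ _).symm (fderiv ℝ (u p.1) p.2) = _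
      rw [fderiv_slice u hu p.1 p.2]
    rw [heq]
    exact (InnerProductSpace.toDual ℝ _).symm.continuous.comp
      ((hu.continuous_fderiv (by simp)).clm_comp continuous_const)
  have hgradρc := hgradc ρ hρsmooth
  have hgradφc := hgradc φ hφsmooth
  -- continuity of rpow part
  have hrpowc : Continuous (fun p : ℝ × EuclideanSpace ℝ (Fin 2) =>
      (ρm - ρ p.1 p.2) ^ β) := by
    rw [continuous_iff_continuousAt]
    intro p
    have h1 : ContinuousAt (fun x : ℝ => x ^ β) (ρm - ρ p.1 p.2) :=
      Real.continuousAt_rpow_const _ β (Or.inl (ne_of_gt (sub_pos.2 (hρbound p.1 p.2).2)))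
    have h2 : ContinuousAt (fun p : ℝ × EuclideanSpace ℝ (Fin 2) => ρm - ρ p.1 p.2) p :=
      (continuous_const.sub hρsmooth.continuous).continuousAt
    exact ContinuousAt.comp (f := fun p : ℝ × EuclideanSpace ℝ (Fin 2) => ρm - ρ p.1 p.2) h1 h2
  -- continuity of G and H
  have hGc : Continuous (fun t => ∫ x in cell2,
      ρ t x * (ρm - ρ t x) ^ β * ⟪gradient (φ t) x, gradient (ρ t) x⟫) := by
    apply continuous_setIntegral_cell2
    exact (hρsmooth.continuous.mul hrpowc).mul (hgradφc.inner hgradρc)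
  have hHc : Continuous (fun t => ∫ x in cell2, ‖gradient (ρ t) x‖ ^ 2) := by
    apply continuous_setIntegral_cell2
    exact (hgradρc.norm).pow 2
  -- gradient of ρm - ρ t
  have hgneg : ∀ (t : ℝ) (x), gradient (fun y => ρm - ρ t y) x = - gradient (ρ t) x := by
    intro t x
    show (InnerProductSpace.toDual ℝ _).symm (fderiv ℝ (fun y => ρm - ρ t y) x)
        = - (InnerProductSpace.toDual ℝ _).symm (fderiv ℝ (ρ t) x)
    rw [fderiv_const_sub, map_neg]
  -- the two integration-by-parts identities
  have hA : ∀ t : ℝ, ∫ x in cell2, (ρm - ρ t x) * div2 (V t) x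
      = ∫ x in cell2, ρ t x * (ρm - ρ t x) ^ β * ⟪gradient (φ t) x, gradient (ρ t) x⟫ := by
    intro t
    rw [ibp (fun y => ρm - ρ t y) (V t) (contDiff_const.sub (hρt t)) (hVt t)
      (fun x j => by simp only [hρp1]) (fun x j => hVp t x j), ← integral_neg]
    refine setIntegral_congr_fun measurableSet_cell2 fun x _ => ?_
    rw [hgneg t x, inner_neg_left, neg_neg]
    show ⟪gradient (ρ t) x, a t x • gradient (φ t) x⟫ = _
    rw [real_inner_smul_right, real_inner_comm]
  have hB : ∀ t : ℝ, ∫ x in cell2, (ρm - ρ t x) * div2 (gradient (ρ t)) x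
      = ∫ x in cell2, ‖gradient (ρ t) x‖ ^ 2 := by
    intro t
    rw [ibp (fun y => ρm - ρ t y) (gradient (ρ t)) (contDiff_const.sub (hρt t))
      (contDiff_gradient _ (hρt t)) (fun x j => by simp only [hρp1])
      (fun x j => hgradρp t x j), ← integral_neg]
    refine setIntegral_congr_fun measurableSet_cell2 fun x _ => ?_
    rw [hgneg t x, inner_neg_left, neg_neg, real_inner_self_eq_norm_sq]
  -- the identity for the derivative of the energy on [0, T]
  have key : ∀ t ∈ Set.Icc (0:ℝ) T, (∫ x in cell2, F' t x)
      = -2 * (∫ x in cell2, ρ t x * (ρm - ρ t x) ^ β * ⟪gradient (φ t) x, gradient (ρ t) x⟫)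
        + (-2*σ) * ∫ x in cell2, ‖gradient (ρ t) x‖ ^ 2 := by
    intro t ht
    have hfp : ∀ x, Dρ t x = div2 (V t) x + σ * div2 (gradient (ρ t)) x := by
      intro x
      rw [← (hder t x).deriv, hFP t ht x, lap2_eq_div2_gradient _ (hρt t) x]
    have e1 : ∀ x, F' t x = (-2) * ((ρm - ρ t x) * div2 (V t) x)
        + (-2*σ) * ((ρm - ρ t x) * div2 (gradient (ρ t)) x) := by
      intro x
      show 2 * (ρm - ρ t x) * (-(Dρ t x)) = _
      rw [hfp x]
      ring
    rw [setIntegral_congr_fun measurableSet_cell2 (fun x _ => e1 x)]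
    rw [integral_add (f := fun x => (-2) * ((ρm - ρ t x) * div2 (V t) x))
      (g := fun x => (-2*σ) * ((ρm - ρ t x) * div2 (gradient (ρ t)) x))
      ((integrableOn_cell2 (((continuous_const.sub (hρt t).continuous).mul
        (continuous_div2 _ (hVt t))))).const_mul _)
      ((integrableOn_cell2 (((continuous_const.sub (hρt t).continuous).mul
        (continuous_div2 _ (contDiff_gradient _ (hρt t)))))).const_mul _),
      integral_const_mul, integral_const_mul, hA t, hB t]
  -- FTC in time
  have he_cont : Continuous fun t => ∫ x in cell2, F' t x := continuous_setIntegral_cell2 F' hF'c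
  have hftc : ∫ t in (0:ℝ)..T, (∫ x in cell2, F' t x)
      = (∫ x in cell2, (ρm - ρ T x) ^ 2) - ∫ x in cell2, (ρm - ρ 0 x) ^ 2 :=
    intervalIntegral.integral_eq_sub_of_hasDerivAt (fun t _ => hE t)
      (he_cont.intervalIntegrable 0 T)
  have hsplit : ∫ t in (0:ℝ)..T, (∫ x in cell2, F' t x)
      = -2 * (∫ t in (0:ℝ)..T, ∫ x in cell2,
          ρ t x * (ρm - ρ t x) ^ β * ⟪gradient (φ t) x, gradient (ρ t) x⟫)
        + (-2*σ) * ∫ t in (0:ℝ)..T, ∫ x in cell2, ‖gradient (ρ t) x‖ ^ 2 := by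
    rw [intervalIntegral.integral_congr (g := fun t =>
      -2 * (∫ x in cell2, ρ t x * (ρm - ρ t x) ^ β * ⟪gradient (φ t) x, gradient (ρ t) x⟫)
        + (-2*σ) * ∫ x in cell2, ‖gradient (ρ t) x‖ ^ 2)
      (fun t ht => key t (by rwa [uIcc_of_le hT.le] at ht))]
    rw [intervalIntegral.integral_add (f := fun t =>
      -2 * (∫ x in cell2, ρ t x * (ρm - ρ t x) ^ β * ⟪gradient (φ t) x, gradient (ρ t) x⟫))
      (g := fun t => (-2*σ) * ∫ x in cell2, ‖gradient (ρ t) x‖ ^ 2) ((continuous_const.mul hGc).intervalIntegrable 0 T)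
      ((continuous_const.mul hHc).intervalIntegrable 0 T),
      intervalIntegral.integral_const_mul, intervalIntegral.integral_const_mul]
  rw [hftc] at hsplit
  linarith [hsplit]
end
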